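/- Let R be a ring and C a class of chain complexes of right R-modules. The class ₍C₎W of all C-acyclic complexes is closed under categorically pure subcomplexes and quotients: for any categorically pure short exact sequence 0 → P → W → Q → 0 of chain complexes of left R-modules, if W is C-acyclic then both P and Q are C-acyclic. -/

import Mathlib

/-!
Tensoring with a fixed complex `C` is right exact degreewise, so `C ⊗ W → C ⊗ Q` is onto with
kernel the image of `C ⊗ P`. Categorical purity says that a chain of `C ⊗ P` which becomes a
boundary in `C ⊗ W` is already a boundary. A cycle of `C ⊗ P` maps to a cycle, hence a boundary,
of the acyclic `C ⊗ W`, so it is a boundary. A cycle `y = g b` of `C ⊗ Q` has `d b = f a` with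
`f a` a boundary, so `a = d p`; then `b - f p` is a cycle, `b - f p = d c`, and `y = d (g c)`.
-/

open CategoryTheory Limits

noncomputable section


namespace KFlatPaper

variable (R : Type) [Ring R]

/-- Cochain complexes of left `R`-modules (indexed by `ℤ`). -/
abbrev Cx := CochainComplex (ModuleCat.{0} R) ℤ

/-- Cochain complexes of right `R`-modules. -/
abbrev CxOp := CochainComplex (ModuleCat.{0} Rᵐᵒᵖ) ℤ

section Tensor

variable (M : Type) [AddCommGroup M] [Module Rᵐᵒᵖ M]
variable (N : Type) [AddCommGroup N] [Module R N]

/-- The subgroup of `M ⊗[ℤ] N` generated by the balancing relations `(m·r) ⊗ n - m ⊗ (r·n)`. -/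
def mtRel : AddSubgroup (TensorProduct ℤ M N) :=
  AddSubgroup.closure {z | ∃ (r : R) (m : M) (n : N),
    z = (MulOpposite.op r • m) ⊗ₜ[ℤ] n - m ⊗ₜ[ℤ] (r • n)}

/-- The tensor product `M ⊗_R N` of a right `R`-module and a left `R`-module
(as an abelian group). -/
def mt := TensorProduct ℤ M N ⧸ mtRel R M N

instance : AddCommGroup (mt R M N) := QuotientAddGroup.Quotient.addCommGroup _

variable {R M N}
variable {M' : Type} [AddCommGroup M'] [Module Rᵐᵒᵖ M']
variable {N' : Type} [AddCommGroup N'] [Module R N']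

/-- Functoriality of `mt` in both variables. -/
def mtMap (f : M →ₗ[Rᵐᵒᵖ] M') (g : N →ₗ[R] N') : mt R M N →+ mt R M' N' :=
  QuotientAddGroup.map _ _
    (TensorProduct.map (f.toAddMonoidHom.toIntLinearMap) (g.toAddMonoidHom.toIntLinearMap)).toAddMonoidHom
    (by
      rw [mtRel, AddSubgroup.closure_le]
      rintro z ⟨r, m, n, rfl⟩
      simp only [SetLike.mem_coe, AddSubgroup.mem_comap, LinearMap.toAddMonoidHom_coe,
        map_sub, TensorProduct.map_tmul, AddMonoidHom.coe_toIntLinearMap,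
        LinearMap.toAddMonoidHom_coe]
      rw [f.map_smul, g.map_smul]
      exact AddSubgroup.subset_closure ⟨r, f m, g n, rfl⟩)

end Tensor


section TensorComplex

variable {R}

/-- Degree `n` part of the tensor product complex `C ⊗_R W`. -/
abbrev tobj (C : CxOp R) (W : Cx R) (n : ℤ) : Type :=
  DirectSum ℤ (fun i => mt R (C.X i) (W.X (n - i)))

/-- The differential of the tensor product complex `C ⊗_R W`,
given on `x ⊗ y` by `dx ⊗ y + (-1)^{|x|} x ⊗ dy`. -/
def td (C : CxOp R) (W : Cx R) (n : ℤ) : tobj C W n →+ tobj C W (n + 1) :=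
  DirectSum.toAddMonoid fun i =>
    (DirectSum.of (fun j => mt R (C.X j) (W.X (n + 1 - j))) (i + 1)).comp
      (mtMap (C.d i (i + 1)).hom ((W.XIsoOfEq (show n - i = n + 1 - (i + 1) by ring)).hom.hom))
    + (((-1 : ℤˣ) ^ i : ℤˣ) : ℤ) •
      (DirectSum.of (fun j => mt R (C.X j) (W.X (n + 1 - j))) i).comp
        (mtMap LinearMap.id
          (((W.XIsoOfEq (show n - i + 1 = n + 1 - i by ring)).hom.hom : W.X (n-i+1) →ₗ[R] W.X (n+1-i)) ∘ₗ
            ((W.d (n - i) (n - i + 1)).hom : W.X (n-i) →ₗ[R] W.X (n-i+1))))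

/-- Cast between degreewise parts of the tensor complex. -/
def tcast (C : CxOp R) (W : Cx R) {m n : ℤ} (h : m = n) : tobj C W m →+ tobj C W n := by
  subst h; exact AddMonoidHom.id _

/-- `C ⊗_R W` is acyclic (exact). -/
def TAcyclic (C : CxOp R) (W : Cx R) : Prop :=
  ∀ n : ℤ, Function.Exact (td C W n) (td C W (n + 1))

/-- Functoriality of the tensor complex in the second variable. -/
def tmapR (C : CxOp R) {W W' : Cx R} (φ : W ⟶ W') (n : ℤ) : tobj C W n →+ tobj C W' n :=
  DirectSum.toAddMonoid fun i =>
    (DirectSum.of (fun j => mt R (C.X j) (W'.X (n - j))) i).comp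
      (mtMap LinearMap.id (φ.f (n - i)).hom)

/-- The boundaries subgroup `B_n(C ⊗_R W)`. -/
def tB (C : CxOp R) (W : Cx R) (n : ℤ) : AddSubgroup (tobj C W n) :=
  AddMonoidHom.range ((tcast C W (show n - 1 + 1 = n by ring)).comp (td C W (n - 1)))

/-- The cycles subgroup `Z_n(C ⊗_R W)`. -/
def tZ (C : CxOp R) (W : Cx R) (n : ℤ) : AddSubgroup (tobj C W n) :=
  AddMonoidHom.ker (td C W n)

end TensorComplex


section ModuleTensor

variable {R}
variable (M : Type) [AddCommGroup M] [Module Rᵐᵒᵖ M]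

/-- The differential of the complex `M ⊗_R W`, for a right `R`-module `M`. -/
def mtd (W : Cx R) (n m : ℤ) : mt R M (W.X n) →+ mt R M (W.X m) :=
  mtMap LinearMap.id (W.d n m).hom

/-- `M ⊗_R W` is acyclic, for a right `R`-module `M`. -/
def MTAcyclic (W : Cx R) : Prop :=
  ∀ n : ℤ, Function.Exact (mtd M W (n - 1) n) (mtd M W n (n + 1))

end ModuleTensor

section Classes

variable {R}

/-- `W` is `𝒞`-acyclic : `C ⊗_R W` is acyclic for every `C ∈ 𝒞`. -/
def CAcyclic (𝒞 : Set (CxOp R)) (W : Cx R) : Prop := ∀ C ∈ 𝒞, TAcyclic C W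

/-- A complex is acyclic (exact) if it is exact in every degree. -/
def Acyclic {S : Type} [Ring S] (X : CochainComplex (ModuleCat.{0} S) ℤ) : Prop :=
  ∀ n : ℤ, X.ExactAt n

/-- `W` is K-flat : `E ⊗_R W` is acyclic for every acyclic complex `E`
of right `R`-modules. -/
def KFlat (W : Cx R) : Prop := ∀ E : CxOp R, Acyclic E → TAcyclic E W

/-- `W` is pure acyclic : `M ⊗_R W` is acyclic for every right `R`-module `M`. -/
def PureAcyclic (W : Cx R) : Prop :=
  ∀ (M : Type) [AddCommGroup M] [Module Rᵐᵒᵖ M], MTAcyclic M W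

end Classes

section Purity

variable {R}
variable {A B C : Type} [AddCommGroup A] [Module R A] [AddCommGroup B] [Module R B]
  [AddCommGroup C] [Module R C]

/-- `0 → A → B → C → 0` is a pure exact sequence of left `R`-modules:
it is a short exact sequence which stays short exact after applying `M ⊗_R -`
for every right `R`-module `M`. -/
def PureSESMod (f : A →ₗ[R] B) (g : B →ₗ[R] C) : Prop :=
  (Function.Injective f ∧ Function.Exact f g ∧ Function.Surjective g) ∧
  ∀ (M : Type) [AddCommGroup M] [Module Rᵐᵒᵖ M],
    Function.Injective (mtMap (LinearMap.id (M := M)) f) ∧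
    Function.Exact (mtMap (LinearMap.id (M := M)) f) (mtMap (LinearMap.id (M := M)) g) ∧
    Function.Surjective (mtMap (LinearMap.id (M := M)) g)

/-- `f` is a pure monomorphism of left `R`-modules. -/
def PureMonoMod (f : A →ₗ[R] B) : Prop :=
  Function.Injective f ∧
  ∀ (M : Type) [AddCommGroup M] [Module Rᵐᵒᵖ M],
    Function.Injective (mtMap (LinearMap.id (M := M)) f)

/-- A pure-injective left `R`-module: one which is injective relative to
pure exact sequences (equivalently, to pure monomorphisms) of modules. -/
def PureInjMod (I : Type) [AddCommGroup I] [Module R I] : Prop :=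
  ∀ (A' B' : Type) [AddCommGroup A'] [Module R A'] [AddCommGroup B'] [Module R B']
    (f : A' →ₗ[R] B'), PureMonoMod f →
      ∀ u : A' →ₗ[R] I, ∃ v : B' →ₗ[R] I, v ∘ₗ f = u

/-- A short exact sequence of complexes which is pure exact in each degree:
an admissible short exact sequence of `Ch(R)_pur`. -/
def DWPureSES {X Y Z : Cx R} (f : X ⟶ Y) (g : Y ⟶ Z) : Prop :=
  ∀ n : ℤ, PureSESMod (f.f n).hom (g.f n).hom

/-- A degreewise pure monomorphism of complexes (an admissible monomorphism
of `Ch(R)_pur`). -/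
def DWPureMonoCx {X Y : Cx R} (f : X ⟶ Y) : Prop :=
  ∀ n : ℤ, PureMonoMod (f.f n).hom

end Purity

section Cotorsion

variable {R}

/-- `Ext¹_pur(X, Y) = 0` : every degreewise pure short exact sequence
`0 → Y → Z → X → 0` splits. -/
def ExtPur1Zero (X Y : Cx R) : Prop :=
  ∀ (Z : Cx R) (i : Y ⟶ Z) (p : Z ⟶ X), DWPureSES i p → ∃ r : Z ⟶ Y, i ≫ r = 𝟙 Y

/-- The right `Ext¹_pur`-orthogonal of a class of complexes. -/
def rOrth (𝒜 : Set (Cx R)) : Set (Cx R) := {Y | ∀ X ∈ 𝒜, ExtPur1Zero X Y}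

/-- The left `Ext¹_pur`-orthogonal of a class of complexes. -/
def lOrth (ℬ : Set (Cx R)) : Set (Cx R) := {X | ∀ Y ∈ ℬ, ExtPur1Zero X Y}

/-- A cotorsion pair in `Ch(R)_pur`. -/
def CotorsionPair (𝒜 ℬ : Set (Cx R)) : Prop := 𝒜 = lOrth ℬ ∧ ℬ = rOrth 𝒜

/-- Completeness of a cotorsion pair `(𝒜, ℬ)` in `Ch(R)_pur` : every complex has
an approximation sequence on each side, by degreewise pure short exact sequences. -/
def CompletePair (𝒜 ℬ : Set (Cx R)) : Prop :=
  (∀ X : Cx R, ∃ (B A : Cx R) (i : B ⟶ A) (p : A ⟶ X),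
      DWPureSES i p ∧ A ∈ 𝒜 ∧ B ∈ ℬ) ∧
  (∀ X : Cx R, ∃ (B A : Cx R) (i : X ⟶ B) (p : B ⟶ A),
      DWPureSES i p ∧ B ∈ ℬ ∧ A ∈ 𝒜)

/-- The pair is hereditary: the left class is closed under kernels of admissible
epimorphisms between its members. -/
def HereditaryLeft (𝒜 : Set (Cx R)) : Prop :=
  ∀ (K A₁ A₂ : Cx R) (i : K ⟶ A₁) (p : A₁ ⟶ A₂),
    DWPureSES i p → A₁ ∈ 𝒜 → A₂ ∈ 𝒜 → K ∈ 𝒜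

/-- Two-out-of-three for a class, relative to the degreewise pure exact structure. -/
def TwoOutOfThree (𝒲 : Set (Cx R)) : Prop :=
  ∀ (X Y Z : Cx R) (f : X ⟶ Y) (g : Y ⟶ Z), DWPureSES f g →
    ((X ∈ 𝒲 → Y ∈ 𝒲 → Z ∈ 𝒲) ∧ (X ∈ 𝒲 → Z ∈ 𝒲 → Y ∈ 𝒲) ∧ (Y ∈ 𝒲 → Z ∈ 𝒲 → X ∈ 𝒲))

/-- `X` is a retract (direct summand) of `Y`. -/
def IsRetractOf (X Y : Cx R) : Prop := ∃ (s : X ⟶ Y) (r : Y ⟶ X), s ≫ r = 𝟙 X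

/-- A thick class: closed under retracts and satisfying two-out-of-three for
degreewise pure short exact sequences. -/
def ThickClass (𝒲 : Set (Cx R)) : Prop :=
  (∀ X Y : Cx R, IsRetractOf X Y → Y ∈ 𝒲 → X ∈ 𝒲) ∧ TwoOutOfThree 𝒲

/-- An injective object of the exact category `Ch(R)_pur`. -/
def PurInjObjCx (I : Cx R) : Prop :=
  ∀ (X Y : Cx R) (f : X ⟶ Y), DWPureMonoCx f → ∀ u : X ⟶ I, ∃ v : Y ⟶ I, f ≫ v = u

/-- An injective cotorsion pair `(𝒲, ℱ)` in `Ch(R)_pur`: a complete cotorsion pair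
with thick left class whose core `𝒲 ∩ ℱ` is the class of injective objects of
`Ch(R)_pur`. -/
def InjectiveCP (𝒲 ℱ : Set (Cx R)) : Prop :=
  CotorsionPair 𝒲 ℱ ∧ CompletePair 𝒲 ℱ ∧ ThickClass 𝒲 ∧
    (𝒲 ∩ ℱ = {I : Cx R | PurInjObjCx I})

/-- A Hovey triple `(𝒬, 𝒲, ℱ)` for the exact category `Ch(R)_pur`: the data of an
abelian (exact) model structure on `Ch(R)_pur` with cofibrant objects `𝒬`, trivial
objects `𝒲`, and fibrant objects `ℱ`. -/
def HoveyTriple (𝒬 𝒲 ℱ : Set (Cx R)) : Prop :=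
  ThickClass 𝒲 ∧
    (CotorsionPair (𝒬 ∩ 𝒲) ℱ ∧ CompletePair (𝒬 ∩ 𝒲) ℱ) ∧
    (CotorsionPair 𝒬 (𝒲 ∩ ℱ) ∧ CompletePair 𝒬 (𝒲 ∩ ℱ))

/-- A cotorsion pair is cogenerated by a set `S` when its right class is `S^⊥`;
`S` is required to be small (a set, not a proper class). -/
def CogenBySet (ℬ : Set (Cx R)) : Prop :=
  ∃ S : Set (Cx R), Small.{0} S ∧ ℬ = rOrth S

/-- The abelian model structure given by a Hovey triple is cofibrantly generated:
both of its associated complete cotorsion pairs are cogenerated by sets. -/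
def CofibrantlyGenerated (𝒬 𝒲 ℱ : Set (Cx R)) : Prop :=
  CogenBySet ℱ ∧ CogenBySet (𝒲 ∩ ℱ)

/-- The weak equivalences of the abelian model structure determined by the
Hovey triple `(𝒬, 𝒲, ℱ)` : morphisms factoring as an admissible monomorphism with
trivially cofibrant cokernel followed by an admissible epimorphism with trivially
fibrant kernel. -/
def WeakEq (𝒬 𝒲 ℱ : Set (Cx R)) : MorphismProperty (Cx R) := fun X Y f =>
  ∃ (Z : Cx R) (i : X ⟶ Z) (p : Z ⟶ Y), f = i ≫ p ∧
    (∃ (T : Cx R) (q : Z ⟶ T), DWPureSES i q ∧ T ∈ 𝒬 ∩ 𝒲) ∧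
    (∃ (K : Cx R) (k : K ⟶ Z), DWPureSES k p ∧ K ∈ 𝒲 ∩ ℱ)

/-- The homotopy category of the abelian model structure determined by a Hovey
triple: the localization at its weak equivalences. -/
def HoCat (𝒬 𝒲 ℱ : Set (Cx R)) := (WeakEq 𝒬 𝒲 ℱ).Localization

instance (𝒬 𝒲 ℱ : Set (Cx R)) : Category (HoCat 𝒬 𝒲 ℱ) := by
  unfold HoCat; infer_instance

end Cotorsion

section HomotopyCat

variable {R}

/-- The chain homotopy category `K(R)`. -/
abbrev KR := HomotopyCategory (ModuleCat.{0} R) (ComplexShape.up ℤ)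

/-- The full subcategory of `K(R)` of all complexes homotopy equivalent to
(i.e. isomorphic in `K(R)` to) a complex satisfying `P`. -/
def Ksub (P : Set (Cx R)) :=
  ObjectProperty.FullSubcategory (fun X : KR (R := R) =>
    ∃ Y : Cx R, P Y ∧
      Nonempty ((((HomotopyCategory.quotient (ModuleCat.{0} R) (ComplexShape.up ℤ))).obj Y ≅ X)))

instance (P : Set (Cx R)) : Category (Ksub P) := by
  unfold Ksub; infer_instance

/-- A contractible complex. -/
def Contractible (X : Cx R) : Prop := Nonempty (Homotopy (𝟙 X) 0)

/-- The class of complexes of pure-injective modules. -/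
def dwPI : Set (Cx R) := {X | ∀ n : ℤ, PureInjMod (R := R) (X.X n)}

/-- The class of acyclic (exact) complexes of pure-injective modules. -/
def exPI : Set (Cx R) := {X | Acyclic X ∧ ∀ n : ℤ, PureInjMod (R := R) (X.X n)}

end HomotopyCat


section QuasiIso

variable {R}
variable (M : Type) [AddCommGroup M] [Module Rᵐᵒᵖ M]

/-- Boundaries of the complex `M ⊗_R W` in degree `n`. -/
def mtB (W : Cx R) (n : ℤ) : AddSubgroup (mt R M (W.X n)) :=
  AddMonoidHom.range (mtd M W (n - 1) n)

/-- Cycles of the complex `M ⊗_R W` in degree `n`. -/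
def mtZ (W : Cx R) (n : ℤ) : AddSubgroup (mt R M (W.X n)) :=
  AddMonoidHom.ker (mtd M W n (n + 1))

/-- For a chain map `f : X → Y`, the map `M ⊗_R f` is a homology isomorphism:
it induces a bijection on the homology of the complexes `M ⊗_R X` and `M ⊗_R Y`
in every degree. -/
def MTQuasiIso {X Y : Cx R} (f : X ⟶ Y) : Prop :=
  ∀ n : ℤ,
    (∀ x ∈ mtZ M X n, mtMap (LinearMap.id (M := M)) (f.f n).hom x ∈ mtB M Y n → x ∈ mtB M X n) ∧
    (∀ y ∈ mtZ M Y n, ∃ x ∈ mtZ M X n,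
      mtMap (LinearMap.id (M := M)) (f.f n).hom x - y ∈ mtB M Y n)

/-- `f` is a pure homology isomorphism: `M ⊗_R f` is a homology isomorphism for
every right `R`-module `M`. -/
def PureQuasiIso {X Y : Cx R} (f : X ⟶ Y) : Prop :=
  ∀ (M : Type) [AddCommGroup M] [Module Rᵐᵒᵖ M], MTQuasiIso M f

/-- For a chain map `f : X → Y` and a complex `C` of right modules, `C ⊗_R f`
is a homology isomorphism. -/
def TQuasiIso (C : CxOp R) {X Y : Cx R} (f : X ⟶ Y) : Prop :=
  ∀ n : ℤ,
    (∀ x ∈ tZ C X n, tmapR C f n x ∈ tB C Y n → x ∈ tB C X n) ∧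
    (∀ y ∈ tZ C Y n, ∃ x ∈ tZ C X n, tmapR C f n x - y ∈ tB C Y n)

/-- `f` is a K-flat quism: `E ⊗_R f` is a homology isomorphism for every
acyclic complex `E` of right `R`-modules. -/
def KFlatQuism {X Y : Cx R} (f : X ⟶ Y) : Prop :=
  ∀ E : CxOp R, Acyclic E → TQuasiIso E f

end QuasiIso


section Transfinite

variable {R}

/-- The restriction of a chain `F : J ⥤ Ch(R)` to the interval below `j`. -/
def iioDiagram {J : Type} [Preorder J] (F : J ⥤ Cx R) (j : J) : Set.Iio j ⥤ Cx R :=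
  (Monotone.functor (f := fun i : Set.Iio j => (i : J)) (fun _ _ h => h)).comp F

/-- The canonical cocone on the restriction of `F` below `j`, with apex `F.obj j`. -/
def iioCocone {J : Type} [Preorder J] (F : J ⥤ Cx R) (j : J) : Cocone (iioDiagram F j) where
  pt := F.obj j
  ι :=
    { app := fun i => F.map (homOfLE i.2.le)
      naturality := fun a b h => by
        dsimp [iioDiagram]
        rw [Category.comp_id, ← F.map_comp]
        congr 1 }

end Transfinite


section Pontryagin

variable {R}
variable (M : Type) [AddCommGroup M] [Module Rᵐᵒᵖ M]

/-- The Pontryagin dual (character module) `Hom_ℤ(M, ℚ/ℤ)` of a right `R`-module,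
as a left `R`-module, where `R` acts by `(r • φ) m = φ (m • r)`. -/
def CharMod : Type := M →+ (AddCircle (1 : ℚ))

instance : AddCommGroup (CharMod M) :=
  inferInstanceAs (AddCommGroup (M →+ AddCircle (1 : ℚ)))

instance : FunLike (CharMod M) M (AddCircle (1 : ℚ)) :=
  inferInstanceAs (FunLike (M →+ AddCircle (1 : ℚ)) M (AddCircle (1 : ℚ)))

instance : AddMonoidHomClass (CharMod M) M (AddCircle (1 : ℚ)) :=
  inferInstanceAs (AddMonoidHomClass (M →+ AddCircle (1 : ℚ)) M (AddCircle (1 : ℚ)))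

variable {M}

theorem charExt {φ ψ : CharMod M} (h : ∀ m, φ m = ψ m) : φ = ψ :=
  AddMonoidHom.ext h

variable (M)

instance : Module R (CharMod M) where
  smul r φ := (φ : M →+ _).comp (DistribMulAction.toAddMonoidHom M (MulOpposite.op r))
  one_smul φ := charExt fun m => by
    show φ ((MulOpposite.op (1 : R)) • m) = φ m
    simp
  mul_smul r s φ := charExt fun m => by
    show φ ((MulOpposite.op (r * s)) • m) = φ (MulOpposite.op s • MulOpposite.op r • m)
    rw [MulOpposite.op_mul, mul_smul]
  smul_zero r := rfl
  smul_add r φ ψ := rfl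
  add_smul r s φ := charExt fun m => by
    show φ ((MulOpposite.op (r + s)) • m)
      = φ (MulOpposite.op r • m) + φ (MulOpposite.op s • m)
    rw [MulOpposite.op_add, add_smul, map_add]
  zero_smul φ := charExt fun m => by
    show φ ((MulOpposite.op (0 : R)) • m) = 0
    simp

variable {M} {N : Type} [AddCommGroup N] [Module Rᵐᵒᵖ N]

/-- The Pontryagin dual of a map of right `R`-modules. -/
def charDual (ψ : M →ₗ[Rᵐᵒᵖ] N) : CharMod N →ₗ[R] CharMod M where
  toFun φ := (φ : N →+ _).comp ψ.toAddMonoidHom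
  map_add' φ₁ φ₂ := rfl
  map_smul' r φ := charExt fun m => by
    show φ (MulOpposite.op r • ψ m) = φ (ψ (MulOpposite.op r • m))
    rw [ψ.map_smul]

theorem charDual_zero : (charDual (0 : M →ₗ[Rᵐᵒᵖ] N)) = (0 : CharMod N →ₗ[R] CharMod M) :=
  LinearMap.ext fun φ => charExt fun _ => map_zero φ

/-- The Pontryagin dual complex `Hom_ℤ(C, ℚ/ℤ)` of a complex of right `R`-modules,
a complex of left `R`-modules. -/
def charCx (C : CxOp R) : Cx R :=
  CochainComplex.of (fun n => ModuleCat.of R (CharMod (C.X (-n))))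
    (fun n => ModuleCat.ofHom (charDual (C.d (-(n+1)) (-n)).hom))
    (fun n => by
      have h : C.d (-(n+1+1)) (-(n+1)) ≫ C.d (-(n+1)) (-n) = 0 := C.d_comp_d _ _ _
      have e : (ModuleCat.ofHom (charDual (C.d (-(n+1)) (-n)).hom) ≫
          ModuleCat.ofHom (charDual (C.d (-(n+1+1)) (-(n+1))).hom))
          = ModuleCat.ofHom (charDual (C.d (-(n+1+1)) (-(n+1)) ≫ C.d (-(n+1)) (-n)).hom) := rfl
      rw [e, h, ModuleCat.hom_zero, charDual_zero]
      rfl)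

end Pontryagin

section Verdier

variable {R}

open Pretriangulated in
/-- The class of morphisms of `K(R)` whose cone is K-flat.  Inverting them gives the
Verdier quotient `K(R)/K-Flat`. -/
def WKFlatK : MorphismProperty (KR (R := R)) := fun X Y f =>
  ∃ (Z : KR (R := R)) (g : Y ⟶ Z) (h : Z ⟶ X⟦(1 : ℤ)⟧),
    (Triangle.mk f g h ∈ distTriang (KR (R := R))) ∧ KFlat Z.as

open Pretriangulated in
/-- The class of morphisms of `K(R)` whose cone is pure acyclic.  Inverting them gives the
Verdier quotient of `K(R)` by the pure acyclic complexes, i.e. `D_pur(R)`. -/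
def WPurK : MorphismProperty (KR (R := R)) := fun X Y f =>
  ∃ (Z : KR (R := R)) (g : Y ⟶ Z) (h : Z ⟶ X⟦(1 : ℤ)⟧),
    (Triangle.mk f g h ∈ distTriang (KR (R := R))) ∧ PureAcyclic Z.as

open Pretriangulated in
/-- The class of morphisms of `K(R)` whose cone is acyclic.  Inverting them gives the
Verdier quotient of `K(R)` by the acyclic complexes, i.e. the derived category `D(R)`. -/
def WAcK : MorphismProperty (KR (R := R)) := fun X Y f =>
  ∃ (Z : KR (R := R)) (g : Y ⟶ Z) (h : Z ⟶ X⟦(1 : ℤ)⟧),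
    (Triangle.mk f g h ∈ distTriang (KR (R := R))) ∧ Acyclic Z.as

variable (R)

/-- The K-flat derived category `D_{K-flat}(R) = K(R)/K-Flat`. -/
def DKFlat := (WKFlatK (R := R)).Localization

instance : Category (DKFlat R) := by unfold DKFlat; infer_instance

/-- The pure derived category `D_pur(R)`, the Verdier quotient of `K(R)` by
the pure acyclic complexes. -/
def DPur := (WPurK (R := R)).Localization

instance : Category (DPur R) := by unfold DPur; infer_instance

/-- The derived category `D(R)`, the Verdier quotient of `K(R)` by
the acyclic complexes. -/
def DerCat := (WAcK (R := R)).Localization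

instance : Category (DerCat R) := by unfold DerCat; infer_instance

/-- The derived category `D(R)` as the localization of `Ch(R)` at the
quasi-isomorphisms. -/
def DerCat' := (HomologicalComplex.quasiIso (ModuleCat.{0} R) (ComplexShape.up ℤ)).Localization

instance : Category (DerCat' R) := by unfold DerCat'; infer_instance

/-- Pure homology isomorphisms as a morphism property on `Ch(R)`. -/
def pureQuasiIsoMP : MorphismProperty (Cx R) := fun _ _ f => PureQuasiIso f

/-- The pure derived category `D_pur(R)` as the localization of `Ch(R)` at the
pure homology isomorphisms. -/
def DPur' := (pureQuasiIsoMP R).Localization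

instance : Category (DPur' R) := by unfold DPur'; infer_instance

end Verdier

section Recollement

universe v₁ u₁ v₂ u₂ v₃ u₃ w v

/-- A recollement of categories `T₁ → T₂ → T₃` : a fully faithful inclusion `i` with
left and right adjoints, and a quotient functor `q` with fully faithful left and right
adjoints, such that the essential image of `i` is the kernel of `q`. -/
structure Recollement (T₁ : Type u₁) (T₂ : Type u₂) (T₃ : Type u₃)
    [Category.{v₁} T₁] [Category.{v₂} T₂] [Category.{v₃} T₃] where
  i : T₁ ⥤ T₂
  q : T₂ ⥤ T₃
  iL : T₂ ⥤ T₁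
  iR : T₂ ⥤ T₁
  qL : T₃ ⥤ T₂
  qR : T₃ ⥤ T₂
  adj₁ : iL ⊣ i
  adj₂ : i ⊣ iR
  adj₃ : qL ⊣ q
  adj₄ : q ⊣ qR
  i_faithful : i.Faithful
  i_full : i.Full
  qL_faithful : qL.Faithful
  qL_full : qL.Full
  qR_faithful : qR.Faithful
  qR_full : qR.Full
  ess : ∀ X : T₂, IsZero (q.obj X) ↔ ∃ Y : T₁, Nonempty (i.obj Y ≅ X)

variable (T : Type u₁) [Category.{v₁} T]

/-- An object `s` of a category with coproducts is compact when every morphism from `s`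
to a coproduct factors through the coproduct of a finite subfamily. -/
def CompactObj {T : Type u₁} [Category.{v₁} T] (s : T) : Prop :=
  ∀ (J : Type) (g : J → T) (c : Cofan g), IsColimit c →
    ∀ f : s ⟶ c.pt, ∃ (t : Finset J) (c' : Cofan fun j : t => g j) (hc' : IsColimit c')
      (f' : s ⟶ c'.pt), f = f' ≫ hc'.desc (Cofan.mk c.pt fun j => c.inj j)

/-- A category with coproducts is compactly generated when there is a set of compact
objects detecting the zero objects. -/
def CompactlyGenerated (T : Type u₁) [Category.{v₁} T] : Prop :=
  HasCoproducts.{0} T ∧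
    ∃ S : Set T, Small.{0} S ∧ (∀ s ∈ S, CompactObj s) ∧
      ∀ X : T, (∀ s ∈ S, ∀ f g : (s : T) ⟶ X, f = g) → IsZero X

/-- A well generated category: there is a regular cardinal `α` and a (small) set `S`
of `α`-small perfect generators. -/
def WellGeneratedCat (T : Type u₁) [Category.{v₁} T] : Prop :=
  HasCoproducts.{0} T ∧
  ∃ α : Cardinal.{0}, α.IsRegular ∧
  ∃ S : Set T, Small.{0} S ∧
    (∀ X : T, (∀ s ∈ S, ∀ f g : (s : T) ⟶ X, f = g) → IsZero X) ∧
    (∀ s ∈ S, ∀ (J : Type) (g : J → T) (c : Cofan g), IsColimit c →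
      ∀ f : (s : T) ⟶ c.pt, ∃ t : Set J, Cardinal.mk t < α ∧
        ∀ (c' : Cofan fun j : t => g j) (hc' : IsColimit c'),
          ∃ f' : (s : T) ⟶ c'.pt, f = f' ≫ hc'.desc (Cofan.mk c.pt fun j => c.inj j)) ∧
    (∀ (J : Type) (X Y : J → T) (φ : ∀ j, X j ⟶ Y j)
        (cX : Cofan X) (hX : IsColimit cX) (cY : Cofan Y), IsColimit cY →
      (∀ s ∈ S, ∀ (j : J) (g : (s : T) ⟶ Y j), ∃ h : (s : T) ⟶ X j, h ≫ φ j = g) →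
      ∀ s ∈ S, ∀ g : (s : T) ⟶ cY.pt,
        ∃ h : (s : T) ⟶ cX.pt, h ≫ hX.desc (Cofan.mk cY.pt fun j => φ j ≫ cY.inj j) = g)

end Recollement

section CatPure

variable {R}

/-- A categorically pure short exact sequence of complexes: a short exact sequence
`0 → P → X → Q → 0` such that for every complex `Y` of right `R`-modules the induced
sequence of modified tensor products `0 → Y ⊗̄ P → Y ⊗̄ X → Y ⊗̄ Q → 0` (whose degree
`n` components are the quotients `(Y ⊗ -)_n / B_n (Y ⊗ -)`) is short exact. -/
def CatPureSES {P X Q : Cx R} (f : P ⟶ X) (g : X ⟶ Q) : Prop :=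
  (∀ n : ℤ, Function.Injective (f.f n) ∧ Function.Exact (f.f n) (g.f n) ∧
      Function.Surjective (g.f n)) ∧
  ∀ (Y : CxOp R) (n : ℤ),
    (∀ a : tobj Y P n, tmapR Y f n a ∈ tB Y X n → a ∈ tB Y P n) ∧
    (∀ b : tobj Y X n, tmapR Y g n b ∈ tB Y Q n ↔
        ∃ a : tobj Y P n, b - tmapR Y f n a ∈ tB Y X n) ∧
    (∀ c : tobj Y Q n, ∃ b : tobj Y X n, c - tmapR Y g n b ∈ tB Y Q n)

end CatPure

theorem _root_.DirectSum.map_exact {ι : Type*} {α β γ : ι → Type*} [∀ i, AddCommMonoid (α i)]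
    [∀ i, AddCommMonoid (β i)] [∀ i, AddCommMonoid (γ i)] {f : ∀ i, α i →+ β i}
    {g : ∀ i, β i →+ γ i} (hfg : ∀ i, Function.Exact (f i) (g i)) :
    Function.Exact (DirectSum.map f) (DirectSum.map g) := by
  classical
  intro x
  constructor
  · intro hx
    have hpre : ∀ i, ∃ a, f i a = x i := fun i =>
      (hfg i (x i)).1 (by rw [← DirectSum.map_apply, hx, DirectSum.zero_apply])
    choose a ha using hpre
    rw [← DirectSum.sum_support_of x]
    refine AddSubmonoid.sum_mem (AddMonoidHom.mrange (DirectSum.map f)) fun i _ =>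
      ⟨DirectSum.of α i (a i), ?_⟩
    rw [DirectSum.map_of, ha]
  · rintro ⟨y, rfl⟩
    ext i
    simp only [DirectSum.map_apply, (hfg i).apply_apply_eq_zero, DirectSum.zero_apply]

section Tensor

variable {R}
variable {M : Type} [AddCommGroup M] [Module Rᵐᵒᵖ M]
variable {N : Type} [AddCommGroup N] [Module R N]
variable {M' : Type} [AddCommGroup M'] [Module Rᵐᵒᵖ M']
variable {N' : Type} [AddCommGroup N'] [Module R N']

theorem mtMap_mk (f : M →ₗ[Rᵐᵒᵖ] M') (g : N →ₗ[R] N') (t : TensorProduct ℤ M N) :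
    mtMap f g (QuotientAddGroup.mk t : mt R M N) =
      QuotientAddGroup.mk (TensorProduct.map f.toAddMonoidHom.toIntLinearMap
        g.toAddMonoidHom.toIntLinearMap t) := rfl

theorem mtMap_id_mk (g : N →ₗ[R] N') (t : TensorProduct ℤ M N) :
    mtMap LinearMap.id g (QuotientAddGroup.mk t : mt R M N) =
      QuotientAddGroup.mk (g.toAddMonoidHom.toIntLinearMap.lTensor M t) := rfl

theorem mtMap_comp_apply {M'' : Type} [AddCommGroup M''] [Module Rᵐᵒᵖ M'']
    {N'' : Type} [AddCommGroup N''] [Module R N''] (f : M →ₗ[Rᵐᵒᵖ] M') (g : N →ₗ[R] N')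
    (f' : M' →ₗ[Rᵐᵒᵖ] M'') (g' : N' →ₗ[R] N'') (x : mt R M N) :
    mtMap f' g' (mtMap f g x) = mtMap (f' ∘ₗ f) (g' ∘ₗ g) x := by
  induction x using QuotientAddGroup.induction_on with
  | H t => rw [mtMap_mk, mtMap_mk, mtMap_mk, ← LinearMap.comp_apply, ← TensorProduct.map_comp]; rfl

@[simp]
theorem mtMap_zero_left (g : N →ₗ[R] N') : mtMap (0 : M →ₗ[Rᵐᵒᵖ] M') g = 0 := by
  ext x
  induction x using QuotientAddGroup.induction_on with
  | H t => rw [mtMap_mk, show (0 : M →ₗ[Rᵐᵒᵖ] M').toAddMonoidHom.toIntLinearMap = 0 from rfl,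
      TensorProduct.map_zero_left]; rfl

@[simp]
theorem mtMap_zero_right (f : M →ₗ[Rᵐᵒᵖ] M') : mtMap f (0 : N →ₗ[R] N') = 0 := by
  ext x
  induction x using QuotientAddGroup.induction_on with
  | H t => rw [mtMap_mk, show (0 : N →ₗ[R] N').toAddMonoidHom.toIntLinearMap = 0 from rfl,
      TensorProduct.map_zero_right]; rfl

section RightExact

variable {A B Cc : Type} [AddCommGroup A] [Module R A] [AddCommGroup B] [Module R B]
  [AddCommGroup Cc] [Module R Cc]

theorem mtRel_le_map_mtRel (g : B →ₗ[R] Cc) (hg : Function.Surjective g) :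
    mtRel R M Cc ≤
      (mtRel R M B).map (g.toAddMonoidHom.toIntLinearMap.lTensor M).toAddMonoidHom := by
  rw [mtRel, AddSubgroup.closure_le]
  rintro _ ⟨r, m, c, rfl⟩
  obtain ⟨b, rfl⟩ := hg c
  refine ⟨_, AddSubgroup.subset_closure ⟨r, m, b, rfl⟩, ?_⟩
  simp [map_sub, LinearMap.lTensor_tmul]

theorem mtMap_id_surjective {g : B →ₗ[R] Cc} (hg : Function.Surjective g) :
    Function.Surjective (mtMap (LinearMap.id (M := M)) g) := by
  intro z
  obtain ⟨t, rfl⟩ := QuotientAddGroup.mk_surjective z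
  obtain ⟨s, rfl⟩ := LinearMap.lTensor_surjective M (g := g.toAddMonoidHom.toIntLinearMap) hg t
  exact ⟨QuotientAddGroup.mk s, rfl⟩

theorem mtMap_id_exact {f : A →ₗ[R] B} {g : B →ₗ[R] Cc} (hfg : Function.Exact f g)
    (hg : Function.Surjective g) :
    Function.Exact (mtMap (LinearMap.id (M := M)) f) (mtMap (LinearMap.id (M := M)) g) := by
  refine fun z => ⟨fun hz => ?_, ?_⟩
  · obtain ⟨t, rfl⟩ := QuotientAddGroup.mk_surjective z
    -- `M ⊗[ℤ] -` is right exact, and the relations of `M ⊗_R Cc` lift along `g`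
    obtain ⟨ρ, hρ, hρt⟩ := mtRel_le_map_mtRel g hg ((QuotientAddGroup.eq_zero_iff _).1 hz)
    obtain ⟨a, ha⟩ := (lTensor_exact M (f := f.toAddMonoidHom.toIntLinearMap)
      (g := g.toAddMonoidHom.toIntLinearMap) hfg hg (t - ρ)).1
        (by rw [map_sub, sub_eq_zero]; exact hρt.symm)
    refine ⟨QuotientAddGroup.mk a, ?_⟩
    rw [mtMap_id_mk, ha, QuotientAddGroup.mk_sub, (QuotientAddGroup.eq_zero_iff ρ).2 hρ, sub_zero]
  · rintro ⟨x, rfl⟩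
    rw [mtMap_comp_apply, LinearMap.id_comp, hfg.linearMap_comp_eq_zero, mtMap_zero_right]
    rfl

end RightExact

end Tensor

section TensorComplex

variable {R}
variable (C : CxOp R)

theorem td_of (W : Cx R) (n i : ℤ) (x : mt R (C.X i) (W.X (n - i))) :
    td C W n (DirectSum.of (fun j => mt R (C.X j) (W.X (n - j))) i x) =
      DirectSum.of (fun j => mt R (C.X j) (W.X (n + 1 - j))) (i + 1)
        (mtMap (C.d i (i + 1)).hom (W.XIsoOfEq (show n - i = n + 1 - (i + 1) by ring)).hom.hom x)
      + (((-1 : ℤˣ) ^ i : ℤˣ) : ℤ) • DirectSum.of (fun j => mt R (C.X j) (W.X (n + 1 - j))) i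
          (mtMap LinearMap.id (W.d (n - i) (n + 1 - i)).hom x) := by
  rw [td, DirectSum.toAddMonoid_of, ← ModuleCat.hom_comp, W.d_comp_XIsoOfEq_hom]
  rfl

theorem td_td (W : Cx R) (n : ℤ) (x : tobj C W n) : td C W (n + 1) (td C W n x) = 0 := by
  induction x using DirectSum.induction_on with
  | zero => simp
  | add a b ha hb => rw [map_add, map_add, ha, hb, add_zero]
  | of i z =>
    rw [td_of, map_add, map_zsmul, td_of, td_of]
    simp only [mtMap_comp_apply, LinearMap.id_comp, LinearMap.comp_id, ← ModuleCat.hom_comp,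
      HomologicalComplex.d_comp_d, HomologicalComplex.d_comp_XIsoOfEq_hom,
      HomologicalComplex.XIsoOfEq_hom_comp_d, ModuleCat.hom_zero, mtMap_zero_left,
      mtMap_zero_right, AddMonoidHom.zero_apply, map_zero, smul_zero, zero_add, add_zero]
    have hsign : (((-1 : ℤˣ) ^ (i + 1) : ℤˣ) : ℤ) = -(((-1 : ℤˣ) ^ i : ℤˣ) : ℤ) := by
      rw [zpow_add_one]; push_cast; ring
    rw [hsign, neg_smul, neg_add_cancel]

theorem tmapR_eq_map {W W' : Cx R} (φ : W ⟶ W') (n : ℤ) :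
    tmapR C φ n = DirectSum.map fun i => mtMap LinearMap.id (φ.f (n - i)).hom :=
  DirectSum.addHom_ext fun i x => by rw [tmapR, DirectSum.toAddMonoid_of, DirectSum.map_of]; rfl

theorem tmapR_td {W W' : Cx R} (φ : W ⟶ W') (n : ℤ) (x : tobj C W n) :
    tmapR C φ (n + 1) (td C W n x) = td C W' n (tmapR C φ n x) := by
  induction x using DirectSum.induction_on with
  | zero => simp
  | add a b ha hb => simp only [map_add, ha, hb]
  | of i z =>
    simp only [tmapR_eq_map, td_of, map_add, map_zsmul, DirectSum.map_of, mtMap_comp_apply,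
      LinearMap.id_comp, LinearMap.comp_id, ← ModuleCat.hom_comp, HomologicalComplex.Hom.comm,
      HomologicalComplex.XIsoOfEq_hom_naturality]

end TensorComplex

section Acyclicity

variable {R}
variable (C : CxOp R)

theorem tB_eq_range (W : Cx R) (n : ℤ) : tB C W (n + 1) = (td C W n).range := by
  -- once the index `n + 1 - 1` is generalized, the cast in `tB` is the identity
  have key : ∀ m (_ : m = n) (h : m + 1 = n + 1),
      ((tcast C W h).comp (td C W m)).range = (td C W n).range := by
    rintro m rfl h
    rfl
  exact key _ (by ring) _

theorem tAcyclic_iff (W : Cx R) :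
    TAcyclic C W ↔ ∀ n (y : tobj C W (n + 1)), td C W (n + 1) y = 0 → y ∈ (td C W n).range :=
  ⟨fun h n y => (h n y).1, fun h n y => ⟨h n y, by rintro ⟨x, rfl⟩; exact td_td C W n x⟩⟩

variable {P W Q : Cx R}

theorem tmapR_surjective {g : W ⟶ Q} (hg : ∀ k, Function.Surjective (g.f k)) (n : ℤ) :
    Function.Surjective (tmapR C g n) := by
  rw [tmapR_eq_map, DirectSum.map_surjective]
  exact fun i => mtMap_id_surjective (hg (n - i))

theorem tmapR_exact {f : P ⟶ W} {g : W ⟶ Q} (hfg : ∀ k, Function.Exact (f.f k) (g.f k))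
    (hg : ∀ k, Function.Surjective (g.f k)) (n : ℤ) :
    Function.Exact (tmapR C f n) (tmapR C g n) := by
  rw [tmapR_eq_map, tmapR_eq_map]
  exact DirectSum.map_exact fun i => mtMap_id_exact (hfg (n - i)) (hg (n - i))

variable {C}

theorem TAcyclic.sub_of_reflects_tB {f : P ⟶ W} (hW : TAcyclic C W)
    (hf : ∀ n a, tmapR C f n a ∈ tB C W n → a ∈ tB C P n) : TAcyclic C P := by
  rw [tAcyclic_iff]
  intro n y hy
  rw [← tB_eq_range]
  apply hf
  rw [tB_eq_range]
  exact (hW n _).1 (by rw [← tmapR_td, hy, map_zero])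

theorem TAcyclic.quotient_of_reflects_tB {f : P ⟶ W} {g : W ⟶ Q} (hW : TAcyclic C W)
    (hfg : ∀ k, Function.Exact (f.f k) (g.f k)) (hg : ∀ k, Function.Surjective (g.f k))
    (hf : ∀ n a, tmapR C f n a ∈ tB C W n → a ∈ tB C P n) : TAcyclic C Q := by
  rw [tAcyclic_iff]
  intro n y hy
  obtain ⟨b, rfl⟩ := tmapR_surjective C hg (n + 1) y
  obtain ⟨a, ha⟩ := (tmapR_exact C hfg hg _ (td C W (n + 1) b)).1 (by rw [tmapR_td]; exact hy)
  obtain ⟨p, rfl⟩ : a ∈ (td C P (n + 1)).range := by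
    rw [← tB_eq_range]
    exact hf _ a (by rw [ha, tB_eq_range]; exact ⟨b, rfl⟩)
  obtain ⟨c, hc⟩ := (hW n (b - tmapR C f (n + 1) p)).1 (by rw [map_sub, ← tmapR_td, ha, sub_self])
  refine ⟨tmapR C g n c, ?_⟩
  rw [← tmapR_td, hc, map_sub, (tmapR_exact C hfg hg _).apply_apply_eq_zero, sub_zero]

end Acyclicity

/-- Proposition 3.7: the class of `𝒞`-acyclic complexes is closed under categorically
pure subcomplexes and quotients. -/
theorem cAcyclic_catPure_closed (𝒞 : Set (CxOp R)) {P W Q : Cx R}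
    (f : P ⟶ W) (g : W ⟶ Q) (h : CatPureSES f g) (hW : CAcyclic 𝒞 W) :
    CAcyclic 𝒞 P ∧ CAcyclic 𝒞 Q := by
  obtain ⟨hdeg, hpure⟩ := h
  exact ⟨fun C hC => (hW C hC).sub_of_reflects_tB fun n => (hpure C n).1,
    fun C hC => (hW C hC).quotient_of_reflects_tB (fun k => (hdeg k).2.1)
      (fun k => (hdeg k).2.2) fun n => (hpure C n).1⟩

end KFlatPaper
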